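/- Fix Δ > 0 and σθ > 0. Then: (i) V(σ, Δ) → ∞ as σ → ∞, so for every exploration cost c > 0 there exists S such that V(σ, Δ) > c for all σ > S; and (ii) for every σ > 0 one has Φ(−Δ/√(σ² + σθ²)) < 1/2, and Φ(−Δ/√(σ² + σθ²)) → 1/2 as σ → ∞. Thus exploration becomes certain in the high-uncertainty limit while the switching probability stays strictly below 1/2 for all finite σ. (Decoupling of exploration and switching, Theorem 2.) -/
import Mathlib

open MeasureTheory

/-- The standard normal density `φ`. -/
noncomputable def stdNormalPDF (x : ℝ) : ℝ :=
  (Real.sqrt (2 * Real.pi))⁻¹ * Real.exp (-x ^ 2 / 2)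

/-- The standard normal CDF `Φ`. -/
noncomputable def stdNormalCDF (x : ℝ) : ℝ :=
  ∫ t in Set.Iic x, stdNormalPDF t

/-- The catalytic value `V(σ, Δ) = -Δ·Φ(-Δ/σ) + σ·φ(-Δ/σ)`. -/
noncomputable def catalyticValue (σ Δ : ℝ) : ℝ :=
  -Δ * stdNormalCDF (-Δ / σ) + σ * stdNormalPDF (-Δ / σ)

open Filter Topology Real Set

lemma sqrt_two_pi_pos : (0 : ℝ) < Real.sqrt (2 * Real.pi) :=
  Real.sqrt_pos.2 (by positivity)

lemma stdNormalPDF_pos (x : ℝ) : 0 < stdNormalPDF x :=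
  mul_pos (inv_pos.2 sqrt_two_pi_pos) (Real.exp_pos _)

lemma stdNormalPDF_le (x : ℝ) : stdNormalPDF x ≤ (Real.sqrt (2 * Real.pi))⁻¹ := by
  have h1 : Real.exp (-x ^ 2 / 2) ≤ 1 := by
    rw [Real.exp_le_one_iff]
    nlinarith [sq_nonneg x]
  calc stdNormalPDF x ≤ (Real.sqrt (2 * Real.pi))⁻¹ * 1 :=
        mul_le_mul_of_nonneg_left h1 (inv_pos.2 sqrt_two_pi_pos).le
    _ = _ := mul_one _

lemma stdNormalPDF_eq (x : ℝ) :
    stdNormalPDF x = (Real.sqrt (2 * Real.pi))⁻¹ * Real.exp (-(1/2) * x ^ 2) := by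
  rw [stdNormalPDF]; ring_nf

lemma stdNormalPDF_integrable : Integrable stdNormalPDF := by
  have h := (integrable_exp_neg_mul_sq (b := (1:ℝ)/2) (by norm_num)).const_mul
    (Real.sqrt (2 * Real.pi))⁻¹
  refine h.congr (Filter.Eventually.of_forall fun x => ?_)
  rw [stdNormalPDF_eq]

lemma stdNormalPDF_total : ∫ x : ℝ, stdNormalPDF x = 1 := by
  simp only [stdNormalPDF_eq]
  rw [MeasureTheory.integral_const_mul, integral_gaussian]
  rw [show Real.pi / (1/2) = 2 * Real.pi by ring]
  exact inv_mul_cancel₀ sqrt_two_pi_pos.ne'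

lemma stdNormalPDF_integral_Ioi_zero :
    ∫ x in Set.Ioi (0:ℝ), stdNormalPDF x = 1 / 2 := by
  simp only [stdNormalPDF_eq]
  rw [MeasureTheory.integral_const_mul, integral_gaussian_Ioi]
  rw [show Real.pi / (1/2) = 2 * Real.pi by ring]
  field_simp

lemma stdNormalCDF_zero : stdNormalCDF 0 = 1 / 2 := by
  have h := intervalIntegral.integral_Iic_add_Ioi (b := (0:ℝ)) (f := stdNormalPDF) (μ := volume)
    stdNormalPDF_integrable.integrableOn stdNormalPDF_integrable.integrableOn
  rw [stdNormalPDF_total, stdNormalPDF_integral_Ioi_zero] at h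
  unfold stdNormalCDF
  linarith

lemma stdNormalCDF_sub (x : ℝ) :
    stdNormalCDF 0 - stdNormalCDF x = ∫ t in x..0, stdNormalPDF t := by
  unfold stdNormalCDF
  exact intervalIntegral.integral_Iic_sub_Iic stdNormalPDF_integrable.integrableOn
    stdNormalPDF_integrable.integrableOn

lemma stdNormalCDF_lt_half {x : ℝ} (hx : x < 0) : stdNormalCDF x < 1 / 2 := by
  have h := stdNormalCDF_sub x
  have hpos : 0 < ∫ t in x..0, stdNormalPDF t :=
    intervalIntegral.intervalIntegral_pos_of_pos (stdNormalPDF_integrable.intervalIntegrable)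
      stdNormalPDF_pos hx
  rw [stdNormalCDF_zero] at h
  linarith

lemma stdNormalCDF_ge {x : ℝ} (hx : x ≤ 0) :
    1 / 2 + x * (Real.sqrt (2 * Real.pi))⁻¹ ≤ stdNormalCDF x := by
  have h := stdNormalCDF_sub x
  rw [stdNormalCDF_zero] at h
  have hb : ‖∫ t in x..0, stdNormalPDF t‖ ≤ (Real.sqrt (2 * Real.pi))⁻¹ * |0 - x| := by
    apply intervalIntegral.norm_integral_le_of_norm_le_const
    intro t _
    rw [Real.norm_eq_abs, abs_of_pos (stdNormalPDF_pos t)]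
    exact stdNormalPDF_le t
  rw [zero_sub, abs_neg, abs_of_nonpos hx] at hb
  have := (abs_le.1 (Real.norm_eq_abs _ ▸ hb)).2
  nlinarith [sqrt_two_pi_pos]

lemma stdNormalCDF_le_half {x : ℝ} (hx : x ≤ 0) : stdNormalCDF x ≤ 1 / 2 := by
  have h := stdNormalCDF_sub x
  rw [stdNormalCDF_zero] at h
  have : 0 ≤ ∫ t in x..0, stdNormalPDF t :=
    intervalIntegral.integral_nonneg hx fun t _ => (stdNormalPDF_pos t).le
  linarith

/-- Decoupling of exploration and switching (Theorem 2): (i) `V(σ, Δ) → ∞` as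
`σ → ∞`, so for every cost `c > 0` exploration is optimal for all large `σ`;
(ii) the switching probability `Φ(-Δ/√(σ² + σθ²))` stays strictly below `1/2` for
every finite `σ > 0`, yet tends to `1/2` as `σ → ∞`. -/
theorem decoupling_exploration_switching (Δ σθ : ℝ) (hΔ : 0 < Δ) (hσθ : 0 < σθ) :
    (Tendsto (fun σ : ℝ => catalyticValue σ Δ) atTop atTop ∧
      ∀ c : ℝ, 0 < c → ∃ S : ℝ, ∀ σ : ℝ, S < σ → c < catalyticValue σ Δ) ∧
    ((∀ σ : ℝ, 0 < σ →
        stdNormalCDF (-Δ / Real.sqrt (σ ^ 2 + σθ ^ 2)) < 1 / 2) ∧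
      Tendsto (fun σ : ℝ => stdNormalCDF (-Δ / Real.sqrt (σ ^ 2 + σθ ^ 2)))
        atTop (𝓝 (1 / 2))) := by
  -- lower bound: for σ ≥ 1, V(σ,Δ) ≥ -Δ + σ * φ(Δ)
  have hlb : ∀ σ : ℝ, 1 ≤ σ → -Δ + σ * stdNormalPDF Δ ≤ catalyticValue σ Δ := by
    intro σ hσ
    have hσ0 : 0 < σ := lt_of_lt_of_le one_pos hσ
    have hx : -Δ / σ ≤ 0 := div_nonpos_iff.2 (Or.inr ⟨by linarith, hσ0.le⟩)
    have hcdf_le : stdNormalCDF (-Δ / σ) ≤ 1 := by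
      have := stdNormalCDF_le_half hx; linarith
    have hcdf0 : 0 ≤ stdNormalCDF (-Δ / σ) :=
      setIntegral_nonneg measurableSet_Iic fun t _ => (stdNormalPDF_pos t).le
    have hcdf_ge : -Δ ≤ -Δ * stdNormalCDF (-Δ / σ) := by nlinarith
    have hpdf : stdNormalPDF Δ ≤ stdNormalPDF (-Δ / σ) := by
      unfold stdNormalPDF
      apply mul_le_mul_of_nonneg_left _ (inv_pos.2 sqrt_two_pi_pos).le
      apply Real.exp_le_exp.2
      have h0 : 0 ≤ Δ / σ := by positivity
      have h1 : Δ / σ ≤ Δ := div_le_self hΔ.le hσ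
      have h2 : (-Δ / σ) ^ 2 ≤ Δ ^ 2 := by
        calc (-Δ / σ) ^ 2 = (Δ / σ) ^ 2 := by rw [neg_div, neg_sq]
          _ ≤ Δ ^ 2 := pow_le_pow_left₀ h0 h1 2
      linarith
    have hmul : σ * stdNormalPDF Δ ≤ σ * stdNormalPDF (-Δ / σ) :=
      mul_le_mul_of_nonneg_left hpdf hσ0.le
    unfold catalyticValue
    linarith
  have htend : Tendsto (fun σ : ℝ => catalyticValue σ Δ) atTop atTop := by
    apply tendsto_atTop_mono' atTop _
      (tendsto_atTop_add_const_left atTop (-Δ)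
        (Tendsto.atTop_mul_const (stdNormalPDF_pos Δ) tendsto_id))
    filter_upwards [eventually_ge_atTop (1:ℝ)] with σ h using hlb σ h
  refine ⟨⟨htend, ?_⟩, ?_, ?_⟩
  · intro c hc
    obtain ⟨S, hS⟩ := eventually_atTop.1 (htend.eventually (eventually_gt_atTop c))
    exact ⟨S, fun σ h => hS σ h.le⟩
  · intro σ hσ
    apply stdNormalCDF_lt_half
    exact div_neg_of_neg_of_pos (by linarith) (Real.sqrt_pos.2 (by positivity))
  · have hs : Tendsto (fun σ : ℝ => Real.sqrt (σ ^ 2 + σθ ^ 2)) atTop atTop := by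
      apply tendsto_atTop_mono' atTop _ tendsto_id
      filter_upwards [eventually_ge_atTop (0:ℝ)] with σ h
      calc σ = Real.sqrt (σ ^ 2) := by rw [Real.sqrt_sq h]
        _ ≤ Real.sqrt (σ ^ 2 + σθ ^ 2) := Real.sqrt_le_sqrt (by nlinarith)
    have hg : Tendsto (fun σ : ℝ => -Δ / Real.sqrt (σ ^ 2 + σθ ^ 2)) atTop (𝓝 0) :=
      Tendsto.div_atTop tendsto_const_nhds hs
    have hneg : ∀ σ : ℝ, -Δ / Real.sqrt (σ ^ 2 + σθ ^ 2) ≤ 0 := fun σ =>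
      div_nonpos_iff.2 (Or.inr ⟨by linarith, Real.sqrt_nonneg _⟩)
    have hlow : Tendsto
        (fun σ : ℝ => 1 / 2 + (-Δ / Real.sqrt (σ ^ 2 + σθ ^ 2)) * (Real.sqrt (2 * Real.pi))⁻¹)
        atTop (𝓝 (1 / 2)) := by
      have := (hg.mul_const (Real.sqrt (2 * Real.pi))⁻¹).const_add (1/2 : ℝ)
      simpa using this
    exact tendsto_of_tendsto_of_tendsto_of_le_of_le hlow tendsto_const_nhds
      (fun σ => stdNormalCDF_ge (hneg σ)) (fun σ => stdNormalCDF_le_half (hneg σ))
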